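/- Let E ⊆ ℝ^d be a compact domain whose boundary ∂E is lower Ahlfors (d−1)-regular at scale η_{∂E} ≥ 1 with constant κ_{∂E}, let 0 < W_i ≤ L (i = 1,…,d), W_max = max_i W_i, L ≥ W_max, s ≥ 1 and 0 < δ < 1. With M_j and the intervals D_{j_i}^{(i)} as in the local trigonometric construction, define Γ^{med} = {(j,k) ∈ ℤ^d × ℤ^d : min_i |D_{j_i}^{(i)}| ≥ δ and dist(k, M_j E_L) < s and dist(k, M_j E_L^c) < s}. Then there exists a constant C_d, depending only on d, such that #Γ^{med} ≤ C_d · max{W_max, 1/η_{∂E}}^{d−1} · (|∂E|/κ_{∂E}) · max{log(W_max/δ), 1}^d · s^d. -/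

import Mathlib

open MeasureTheory Set Filter
open scoped ENNReal NNReal Classical

noncomputable section

/-- The eigenvalue/singular-value sequence of an operator, listed with multiplicity:
`eigSeq S n = inf {‖S - S₀‖ : rank S₀ < n+1}` (so `eigSeq S (k-1)` is the paper's `λ_k`). -/
def eigSeq {H : Type*} [NormedAddCommGroup H] [NormedSpace ℂ H] (S : H →L[ℂ] H) (n : ℕ) : ℝ :=
  sInf {r : ℝ | ∃ S₀ : H →L[ℂ] H,
    Module.rank ℂ (LinearMap.range (S₀ : H →ₗ[ℂ] H)) < ((n + 1 : ℕ) : Cardinal) ∧ r = ‖S - S₀‖}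

/-- `X` is lower Ahlfors `(d-1)`-regular at scale `η` with constant `κ`. -/
def LowerAhlfors (d : ℕ) (X : Set (EuclideanSpace ℝ (Fin d))) (η κ : ℝ) : Prop :=
  ∀ x ∈ X, ∀ r : ℝ, 0 < r → r ≤ η →
    ENNReal.ofReal (κ * r ^ ((d : ℝ) - 1)) ≤ μH[(d : ℝ) - 1] (X ∩ Metric.ball x r)

/-- `X` is maximally Ahlfors regular with constant `κ`: lower Ahlfors `(d-1)`-regular at the
scale `H^{d-1}(X)^{1/(d-1)}`. -/
def MaxAhlfors (d : ℕ) (X : Set (EuclideanSpace ℝ (Fin d))) (κ : ℝ) : Prop :=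
  ∀ x ∈ X, ∀ r : ℝ, 0 < r →
    ENNReal.ofReal r ≤ (μH[(d : ℝ) - 1] X) ^ (1 / ((d : ℝ) - 1)) →
    ENNReal.ofReal (κ * r ^ ((d : ℝ) - 1)) ≤ μH[(d : ℝ) - 1] (X ∩ Metric.ball x r)

/-- Membership in the lattice `L⁻¹ ℤ^d`. -/
def latticePt (d : ℕ) (L : ℝ) (x : EuclideanSpace ℝ (Fin d)) : Prop :=
  ∀ i, ∃ k : ℤ, x i = k / L

/-- The discretization `E_L = L⁻¹ℤ^d ∩ E` of a set `E ⊆ ℝ^d` at resolution `L`. -/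
def discretization (d : ℕ) (L : ℝ) (E : Set (EuclideanSpace ℝ (Fin d))) :
    Set (EuclideanSpace ℝ (Fin d)) :=
  {x | x ∈ E ∧ latticePt d L x}

/-- Center `x_j = sign(j)·(W/2)·(1 - 2^{-|j|})` of the dyadic decomposition of `(-W/2, W/2)`. -/
def xJ (W : ℝ) (j : ℤ) : ℝ := (Int.sign j : ℝ) * (W / 2) * (1 - (2 : ℝ)⁻¹ ^ j.natAbs)

/-- Length of the interval `I_j = x_j + (W/(3·2^{|j|+1}))·[-1,1)`. -/
def lenI (W : ℝ) (j : ℤ) : ℝ := W / (3 * 2 ^ j.natAbs)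

/-- Length of `D_j = I_j ∪ I_{j+1}`. -/
def lenD (W : ℝ) (j : ℤ) : ℝ := lenI W j + lenI W (j + 1)

/-- The discrete boundary `∂E_L` of the discretization `E_L`: points of `E_L` at distance
exactly `1/L` from `E_L^c = L⁻¹ℤ^d ∖ E_L`. -/
def dBdryL (d : ℕ) (L : ℝ) (E : Set (EuclideanSpace ℝ (Fin d))) :
    Set (EuclideanSpace ℝ (Fin d)) :=
  {x | x ∈ discretization d L E ∧
    ∃ y : EuclideanSpace ℝ (Fin d), latticePt d L y ∧ y ∉ E ∧ dist x y = 1 / L}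

/-- Euclidean distance from the integer point `k` to the point `M_j y`, where
`M_j = diag(|D_{j_1}|, …, |D_{j_d}|)`. -/
def Mdist (d : ℕ) (W : Fin d → ℝ) (j k : Fin d → ℤ) (y : EuclideanSpace ℝ (Fin d)) : ℝ :=
  Real.sqrt (∑ i, ((k i : ℝ) - lenD (W i) (j i) * y i) ^ 2)

/-!
For `(j, k) ∈ Γ^med` the segment from a point of `E` to a point outside `E` crosses `∂E`, and
since `y ↦ |k - M_j y|` is convex the crossing point `z` still has `|k - M_j z| < s`. The
constraint `|D_{j_i}| ≥ δ` forces `|j_i| ≤ 2 max{log (W_max/δ), 1}`. Let `S ⊆ ∂E` be a maximal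
`r`-separated set, `r = 1 / max{W_max, 1/η}`. As `M_j` stretches by at most `W_max`, every such
`k` lies within `s + 1` of some `M_j z'` with `z' ∈ S`, which bounds `#Γ^med` by a multiple of
`max{log (W_max/δ), 1}^d · #S · s^d`; and lower Ahlfors regularity on the disjoint balls
`B(z', r/2) ∩ ∂E` gives `#S · κ (r/2)^{d-1} ≤ |∂E|`.
-/

lemma lenD_nonneg {W : ℝ} (hW : 0 ≤ W) (j : ℤ) : 0 ≤ lenD W j := by
  unfold lenD lenI; positivity

lemma lenD_le_div_two_pow {W : ℝ} (hW : 0 ≤ W) (j : ℤ) : lenD W j ≤ W / 2 ^ j.natAbs := by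
  have hj : (2 : ℝ) ^ j.natAbs ≤ 2 * 2 ^ (j + 1).natAbs := by
    rw [← pow_succ']; exact pow_le_pow_right₀ one_le_two (by omega)
  have hnext : W / (3 * 2 ^ (j + 1).natAbs) ≤ 2 * W / (3 * 2 ^ j.natAbs) := by
    rw [div_le_div_iff₀ (by positivity) (by positivity)]; nlinarith
  unfold lenD lenI
  calc W / (3 * 2 ^ j.natAbs) + W / (3 * 2 ^ (j + 1).natAbs)
      ≤ W / (3 * 2 ^ j.natAbs) + 2 * W / (3 * 2 ^ j.natAbs) := by gcongr
    _ = W / 2 ^ j.natAbs := by field_simp; ring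

lemma lenD_le {W : ℝ} (hW : 0 ≤ W) (j : ℤ) : lenD W j ≤ W :=
  (lenD_le_div_two_pow hW j).trans (div_le_self hW (one_le_pow₀ one_le_two))

lemma natAbs_le_of_le_lenD {W Wmax δ : ℝ} (hδ : 0 < δ) (hW : 0 ≤ W) (hWmax : W ≤ Wmax) {j : ℤ}
    (h : δ ≤ lenD W j) : (j.natAbs : ℝ) ≤ 2 * max (Real.log (Wmax / δ)) 1 := by
  have hpow : (2 : ℝ) ^ j.natAbs ≤ Wmax / δ := by
    rw [le_div_iff₀ hδ, mul_comm, ← le_div_iff₀ (by positivity)]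
    exact h.trans ((lenD_le_div_two_pow hW j).trans (by gcongr))
  have hlog : j.natAbs * Real.log 2 ≤ Real.log (Wmax / δ) := by
    rw [← Real.log_pow]; exact Real.log_le_log (by positivity) hpow
  have hlog2 := Real.log_two_gt_d9
  nlinarith [le_max_left (Real.log (Wmax / δ)) 1, le_max_right (Real.log (Wmax / δ)) 1,
    (Nat.cast_nonneg j.natAbs : (0 : ℝ) ≤ j.natAbs)]

section IntBox

variable {ι : Type*} [Fintype ι] [DecidableEq ι]

def intBox (c : ι → ℝ) (R : ℝ) : Finset (ι → ℤ) :=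
  Fintype.piFinset fun i => Finset.Icc ⌈c i - R⌉ ⌊c i + R⌋

lemma mem_intBox {c : ι → ℝ} {R : ℝ} {k : ι → ℤ} :
    k ∈ intBox c R ↔ ∀ i, |(k i : ℝ) - c i| ≤ R := by
  simp only [intBox, Fintype.mem_piFinset, Finset.mem_Icc, Int.ceil_le, Int.le_floor, abs_le]
  refine forall_congr' fun i => ?_
  constructor <;> rintro ⟨h₁, h₂⟩ <;> constructor <;> linarith

lemma card_intBox_le (c : ι → ℝ) {R : ℝ} (hR : 0 ≤ R) :
    ((intBox c R).card : ℝ) ≤ (2 * R + 1) ^ Fintype.card ι := by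
  rw [intBox, Fintype.card_piFinset, Nat.cast_prod, ← Finset.card_univ, ← Finset.prod_const]
  refine Finset.prod_le_prod (fun _ _ => Nat.cast_nonneg _) fun i _ => ?_
  have hcast : ((Finset.Icc ⌈c i - R⌉ ⌊c i + R⌋).card : ℝ)
      = max ((⌊c i + R⌋ + 1 - ⌈c i - R⌉ : ℤ) : ℝ) 0 := by
    rw [Int.card_Icc, ← Int.cast_natCast, Int.toNat_eq_max]; push_cast; rfl
  rw [hcast]
  refine max_le ?_ (by positivity)
  push_cast
  linarith [Int.floor_le (c i + R), Int.le_ceil (c i - R)]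

lemma finite_and_ncard_le_of_forall_mem_intBox {α β : Type*} {A : Set (α × (ι → ℤ))}
    (J : Finset α) (S : Finset β) (c : α → β → ι → ℝ) {R : ℝ} (hR : 0 ≤ R)
    (hA : ∀ p ∈ A, p.1 ∈ J ∧ ∃ z ∈ S, p.2 ∈ intBox (c p.1 z) R) :
    A.Finite ∧ (A.ncard : ℝ) ≤ J.card * S.card * (2 * R + 1) ^ Fintype.card ι := by
  set T := J.biUnion fun j => S.biUnion fun z => (intBox (c j z) R).image (Prod.mk j)
  have hAT : A ⊆ T := by
    intro p hp
    obtain ⟨hj, z, hz, hk⟩ := hA p hp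
    simp only [T, Finset.coe_biUnion, Finset.coe_image, Set.mem_iUnion, Set.mem_image]
    exact ⟨p.1, hj, z, hz, p.2, hk, rfl⟩
  refine ⟨T.finite_toSet.subset hAT, ?_⟩
  have hT : (T.card : ℝ) ≤ ∑ j ∈ J, ∑ z ∈ S, ((intBox (c j z) R).card : ℝ) := by
    norm_cast
    refine Finset.card_biUnion_le.trans (Finset.sum_le_sum fun j _ => ?_)
    exact Finset.card_biUnion_le.trans
      (Finset.sum_le_sum fun z _ => Finset.card_image_le)
  calc (A.ncard : ℝ) ≤ T.card := by
        exact_mod_cast (Set.ncard_le_ncard hAT T.finite_toSet).trans_eq (Set.ncard_coe_finset T)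
    _ ≤ ∑ j ∈ J, ∑ z ∈ S, ((intBox (c j z) R).card : ℝ) := hT
    _ ≤ ∑ j ∈ J, ∑ z ∈ S, (2 * R + 1) ^ Fintype.card ι := by
        gcongr with j _ z _; exact card_intBox_le _ hR
    _ = J.card * S.card * (2 * R + 1) ^ Fintype.card ι := by simp [mul_assoc]

end IntBox

lemma IsPreconnected.inter_frontier_nonempty {X : Type*} [TopologicalSpace X] {s t : Set X}
    (hs : IsPreconnected s) (hst : (s ∩ t).Nonempty) (hst' : (s \ t).Nonempty) :
    (s ∩ frontier t).Nonempty := by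
  by_contra! h
  have hsub : s ⊆ interior t ∪ (closure t)ᶜ := by
    intro z hz
    by_contra hz'
    simp only [Set.mem_union, Set.mem_compl_iff, not_or, not_not] at hz'
    exact (Set.eq_empty_iff_forall_notMem.1 h) z ⟨hz, hz'.2, hz'.1⟩
  obtain ⟨x, hxs, hxt⟩ := hst
  obtain ⟨y, hys, hyt⟩ := hst'
  have hx : x ∈ interior t := (hsub hxs).resolve_right (not_not.2 (subset_closure hxt))
  have hy : y ∈ (closure t)ᶜ := (hsub hys).resolve_left fun h => hyt (interior_subset h)
  obtain ⟨z, -, hzi, hzc⟩ := hs _ _ isOpen_interior isClosed_closure.isOpen_compl hsub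
    ⟨x, hxs, hx⟩ ⟨y, hys, hy⟩
  exact hzc (interior_subset_closure hzi)

section Mdist

variable {d : ℕ} (W : Fin d → ℝ) (j k : Fin d → ℤ)

lemma abs_sub_le_Mdist (y : EuclideanSpace ℝ (Fin d)) (i : Fin d) :
    |(k i : ℝ) - lenD (W i) (j i) * y i| ≤ Mdist d W j k y := by
  rw [Mdist, ← Real.sqrt_sq_eq_abs]
  exact Real.sqrt_le_sqrt
    (Finset.single_le_sum (f := fun i => ((k i : ℝ) - lenD (W i) (j i) * y i) ^ 2)
      (fun _ _ => sq_nonneg _) (Finset.mem_univ i))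

lemma Mdist_eq_dist (y : EuclideanSpace ℝ (Fin d)) :
    Mdist d W j k y = dist ((Matrix.diagonal fun i => lenD (W i) (j i)).toEuclideanLin y)
      (WithLp.toLp 2 fun i => (k i : ℝ)) := by
  rw [Mdist, EuclideanSpace.dist_eq]
  congr 1
  refine Finset.sum_congr rfl fun i _ => ?_
  simp only [Matrix.toLpLin_apply, Matrix.mulVec_diagonal, Real.dist_eq, sq_abs]
  ring

lemma convexOn_Mdist : ConvexOn ℝ Set.univ (Mdist d W j k) := by
  have := (convexOn_dist (WithLp.toLp 2 fun i => (k i : ℝ)) convex_univ).comp_linearMap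
    (Matrix.diagonal fun i => lenD (W i) (j i)).toEuclideanLin
  simpa [Function.comp_def, ← Mdist_eq_dist] using this

end Mdist

lemma exists_mem_frontier_Mdist_lt {d : ℕ} {W : Fin d → ℝ} {j k : Fin d → ℤ}
    {E : Set (EuclideanSpace ℝ (Fin d))} {x y : EuclideanSpace ℝ (Fin d)} {s : ℝ}
    (hx : x ∈ E) (hy : y ∉ E) (hxs : Mdist d W j k x < s) (hys : Mdist d W j k y < s) :
    ∃ z ∈ frontier E, Mdist d W j k z < s := by
  obtain ⟨z, hz, hzE⟩ := (convex_segment x y).isPreconnected.inter_frontier_nonempty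
    ⟨x, left_mem_segment ℝ x y, hx⟩ ⟨y, right_mem_segment ℝ x y, hy⟩
  exact ⟨z, hzE, ((convexOn_Mdist W j k).le_on_segment (Set.mem_univ x) (Set.mem_univ y)
    hz).trans_lt (max_lt hxs hys)⟩

open Metric in
lemma IsCompact.exists_finset_separated_cover {X : Type*} [MetricSpace X] {s : Set X}
    (hs : IsCompact s) {ε : ℝ} (hε : 0 < ε) :
    ∃ S : Finset X, ↑S ⊆ s ∧ (∀ a ∈ S, ∀ b ∈ S, a ≠ b → ε < dist a b) ∧
      ∀ x ∈ s, ∃ z ∈ S, dist x z ≤ ε := by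
  set ε' : ℝ≥0 := ε.toNNReal
  have hpack : packingNumber ε' s ≠ ⊤ := by
    obtain ⟨N, -, hN, hcover⟩ :=
      exists_finite_isCover_of_isCompact (ε := ε' / 2) (by simpa [ε'] using hε) hs
    refine ne_top_of_le_ne_top (hN.encard_lt_top.ne) ?_
    calc packingNumber ε' s = packingNumber (2 * (ε' / 2)) s := by
          rw [mul_div_cancel₀ _ two_ne_zero]
      _ ≤ externalCoveringNumber (ε' / 2) s := packingNumber_two_mul_le_externalCoveringNumber _ _
      _ ≤ N.encard := hcover.externalCoveringNumber_le_encard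
  have hfin : (maximalSeparatedSet ε' s).Finite := by
    rw [← Set.encard_ne_top_iff, encard_maximalSeparatedSet hpack]; exact hpack
  refine ⟨hfin.toFinset, by simpa using maximalSeparatedSet_subset, ?_, ?_⟩
  · intro a ha b hb hab
    have : ENNReal.ofReal ε < edist a b :=
      isSeparated_maximalSeparatedSet (by simpa using ha) (by simpa using hb) hab
    rw [edist_dist] at this
    exact (ENNReal.ofReal_lt_ofReal_iff'.1 this).1
  · intro x hx
    obtain ⟨z, hz, hxz⟩ := isCover_maximalSeparatedSet hpack hx
    exact ⟨z, by simpa using hz, (edist_le_ofReal hε.le).1 hxz⟩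

lemma LowerAhlfors.card_mul_le_of_separated {d : ℕ} {X : Set (EuclideanSpace ℝ (Fin d))} {η κ : ℝ}
    (hA : LowerAhlfors d X η κ) (hX : MeasurableSet X) {r : ℝ} (hr : 0 < r) (hrη : r / 2 ≤ η)
    {S : Finset (EuclideanSpace ℝ (Fin d))} (hSX : ↑S ⊆ X)
    (hS : ∀ a ∈ S, ∀ b ∈ S, a ≠ b → r < dist a b) :
    (S.card : ℝ≥0∞) * ENNReal.ofReal (κ * (r / 2) ^ ((d : ℝ) - 1)) ≤ μH[(d : ℝ) - 1] X := by
  have hdisj : (S : Set (EuclideanSpace ℝ (Fin d))).PairwiseDisjoint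
      fun z => X ∩ Metric.ball z (r / 2) := by
    intro a ha b hb hab
    refine Set.disjoint_left.2 fun w hwa hwb => (hS a ha b hb hab).not_ge ?_
    linarith [dist_triangle a w b, Metric.mem_ball'.1 hwa.2, Metric.mem_ball.1 hwb.2]
  calc (S.card : ℝ≥0∞) * ENNReal.ofReal (κ * (r / 2) ^ ((d : ℝ) - 1))
      = ∑ z ∈ S, ENNReal.ofReal (κ * (r / 2) ^ ((d : ℝ) - 1)) := by
        rw [Finset.sum_const, nsmul_eq_mul]
    _ ≤ ∑ z ∈ S, μH[(d : ℝ) - 1] (X ∩ Metric.ball z (r / 2)) :=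
        Finset.sum_le_sum fun z hz => hA z (hSX hz) (r / 2) (half_pos hr) hrη
    _ = μH[(d : ℝ) - 1] (⋃ z ∈ S, X ∩ Metric.ball z (r / 2)) :=
        (measure_biUnion_finset hdisj fun z _ => hX.inter measurableSet_ball).symm
    _ ≤ μH[(d : ℝ) - 1] X := measure_mono (Set.iUnion₂_subset fun _ _ => Set.inter_subset_left)

lemma mem_intBox_of_Mdist_lt {d : ℕ} {W : Fin d → ℝ} {j k : Fin d → ℤ}
    {z z' : EuclideanSpace ℝ (Fin d)} {r s : ℝ} (hW : ∀ i, 0 ≤ W i) (hWr : ∀ i, W i * r ≤ 1)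
    (hks : Mdist d W j k z < s) (hzz' : dist z z' ≤ r) :
    k ∈ intBox (fun i => lenD (W i) (j i) * z' i) (s + 1) := by
  refine mem_intBox.2 fun i => ?_
  have hc := lenD_nonneg (hW i) (j i)
  have hshift : |lenD (W i) (j i) * (z i - z' i)| ≤ 1 := by
    rw [abs_mul, abs_of_nonneg hc]
    have hzi : |z i - z' i| ≤ r := by
      rw [← Real.dist_eq]; exact (PiLp.dist_apply_le z z' i).trans hzz'
    exact (mul_le_mul (lenD_le (hW i) _) hzi (abs_nonneg _) (hW i)).trans (hWr i)
  calc |(k i : ℝ) - lenD (W i) (j i) * z' i|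
      = |((k i : ℝ) - lenD (W i) (j i) * z i) + lenD (W i) (j i) * (z i - z' i)| := by ring_nf
    _ ≤ s + 1 := (abs_add_le _ _).trans
        (add_le_add ((abs_sub_le_Mdist W j k z i).trans hks.le) hshift)

/-- The paper's `Γ^med`. -/
def mediumIndexSet (d : ℕ) (W : Fin d → ℝ) (L : ℝ) (E : Set (EuclideanSpace ℝ (Fin d)))
    (s δ : ℝ) : Set ((Fin d → ℤ) × (Fin d → ℤ)) :=
  {jk | (∀ i, δ ≤ lenD (W i) (jk.1 i)) ∧
    (∃ x ∈ discretization d L E, Mdist d W jk.1 jk.2 x < s) ∧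
    (∃ y : EuclideanSpace ℝ (Fin d), latticePt d L y ∧ y ∉ E ∧ Mdist d W jk.1 jk.2 y < s)}

lemma mem_intBox_of_mem_mediumIndexSet {d : ℕ} {W : Fin d → ℝ} {L s δ Wmax r : ℝ}
    {E : Set (EuclideanSpace ℝ (Fin d))} {S : Finset (EuclideanSpace ℝ (Fin d))}
    (hW : ∀ i, 0 ≤ W i) (hδ : 0 < δ) (hWmax : ∀ i, W i ≤ Wmax) (hWr : ∀ i, W i * r ≤ 1)
    (hS : ∀ x ∈ frontier E, ∃ z ∈ S, dist x z ≤ r) {p : (Fin d → ℤ) × (Fin d → ℤ)}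
    (hp : p ∈ mediumIndexSet d W L E s δ) :
    p.1 ∈ intBox 0 (2 * max (Real.log (Wmax / δ)) 1) ∧
      ∃ z ∈ S, p.2 ∈ intBox (fun i => lenD (W i) (p.1 i) * z i) (s + 1) := by
  obtain ⟨hj, ⟨x, hx, hxs⟩, y, -, hy, hys⟩ := hp
  obtain ⟨z, hz, hzs⟩ := exists_mem_frontier_Mdist_lt hx.1 hy hxs hys
  obtain ⟨z', hz', hzz'⟩ := hS z hz
  refine ⟨mem_intBox.2 fun i => ?_, z', hz', mem_intBox_of_Mdist_lt hW hWr hzs hzz'⟩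
  simpa using natAbs_le_of_le_lenD hδ (hW i) (hWmax i) (hj i)

/-- The constant: `(4Λ + 1)(2s + 3) ≤ 25 Λ s`, and `2^d` absorbs the `2^(d-1)` lost to the
radius `r / 2` of the Ahlfors balls. -/
lemma ofReal_mul_count_le {d nJ nS : ℕ} {κ Λ s A : ℝ} {μ : ℝ≥0∞} (hκ : 0 ≤ κ) (hΛ : 1 ≤ Λ)
    (hs : 1 ≤ s) (hA : 0 < A) (hJ : (nJ : ℝ) ≤ (2 * (2 * Λ) + 1) ^ d)
    (hS : (nS : ℝ≥0∞) * ENNReal.ofReal (κ * (A⁻¹ / 2) ^ ((d : ℝ) - 1)) ≤ μ) :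
    ENNReal.ofReal (κ * (nJ * nS * (2 * (s + 1) + 1) ^ d)) ≤
      ENNReal.ofReal (50 ^ d * A ^ ((d : ℝ) - 1) * Λ ^ d * s ^ d) * μ := by
  set e := (d : ℝ) - 1
  have hradius : (25 : ℝ) ^ d ≤ 50 ^ d * (A ^ e * (A⁻¹ / 2) ^ e) := by
    rw [← Real.mul_rpow hA.le (by positivity), mul_div_assoc', mul_inv_cancel₀ hA.ne']
    calc (25 : ℝ) ^ d = 50 ^ d * (1 / 2) ^ (d : ℝ) := by
          rw [Real.rpow_natCast, ← mul_pow]; norm_num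
      _ ≤ 50 ^ d * (1 / 2) ^ e := mul_le_mul_of_nonneg_left
          (Real.rpow_le_rpow_of_exponent_ge (by norm_num) (by norm_num) (by simp [e]))
          (by positivity)
  have hJ' : (nJ : ℝ) ≤ (5 * Λ) ^ d := hJ.trans (pow_le_pow_left₀ (by positivity) (by linarith) d)
  have hs' : (2 * (s + 1) + 1) ^ d ≤ (5 * s) ^ d := pow_le_pow_left₀ (by positivity) (by linarith) d
  have hreal : κ * (nJ * nS * (2 * (s + 1) + 1) ^ d) ≤
      (50 ^ d * A ^ e * Λ ^ d * s ^ d) * (nS * (κ * (A⁻¹ / 2) ^ e)) :=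
    calc κ * (nJ * nS * (2 * (s + 1) + 1) ^ d) ≤ κ * ((5 * Λ) ^ d * nS * (5 * s) ^ d) := by
          gcongr
      _ = 25 ^ d * (Λ ^ d * s ^ d * nS * κ) := by
          rw [mul_pow, mul_pow, show (25 : ℝ) ^ d = 5 ^ d * 5 ^ d by rw [← mul_pow]; norm_num]
          ring
      _ ≤ (50 ^ d * (A ^ e * (A⁻¹ / 2) ^ e)) * (Λ ^ d * s ^ d * nS * κ) := by gcongr
      _ = _ := by ring
  calc _ ≤ _ := ENNReal.ofReal_le_ofReal hreal
    _ = ENNReal.ofReal (50 ^ d * A ^ e * Λ ^ d * s ^ d) *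
          (nS * ENNReal.ofReal (κ * (A⁻¹ / 2) ^ e)) := by
      rw [ENNReal.ofReal_mul (p := 50 ^ d * A ^ e * Λ ^ d * s ^ d) (by positivity),
        ENNReal.ofReal_mul (p := (nS : ℝ)) (by positivity), ENNReal.ofReal_natCast]
    _ ≤ _ := by gcongr

/-- **Lemma 3.4.** Cardinality of the medium index set
`Γ^{med} = {(j,k) : min_i |D_{j_i}| ≥ δ, dist(k, M_j E_L) < s, dist(k, M_j E_L^c) < s}`:
`#Γ^{med} ≤ C_d max{W_max, 1/η_{∂E}}^{d-1} (|∂E|/κ_{∂E}) max{log(W_max/δ),1}^d s^d`. -/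
theorem stmt_10 (d : ℕ) :
    ∃ C : ℝ, 0 < C ∧
      ∀ (E : Set (EuclideanSpace ℝ (Fin d))) (η κ L s δ : ℝ) (W : Fin d → ℝ),
        IsCompact E → 1 ≤ η → 0 < κ → LowerAhlfors d (frontier E) η κ →
        (∀ i, 0 < W i) → (∀ i, W i ≤ L) → 1 ≤ s → 0 < δ → δ < 1 →
        {jk : (Fin d → ℤ) × (Fin d → ℤ) |
            (∀ i, δ ≤ lenD (W i) (jk.1 i)) ∧
            (∃ x ∈ discretization d L E, Mdist d W jk.1 jk.2 x < s) ∧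
            (∃ y : EuclideanSpace ℝ (Fin d),
              latticePt d L y ∧ y ∉ E ∧ Mdist d W jk.1 jk.2 y < s)}.Finite ∧
        ENNReal.ofReal (κ *
            ({jk : (Fin d → ℤ) × (Fin d → ℤ) |
              (∀ i, δ ≤ lenD (W i) (jk.1 i)) ∧
              (∃ x ∈ discretization d L E, Mdist d W jk.1 jk.2 x < s) ∧
              (∃ y : EuclideanSpace ℝ (Fin d),
                latticePt d L y ∧ y ∉ E ∧ Mdist d W jk.1 jk.2 y < s)}.ncard : ℝ)) ≤
          ENNReal.ofReal (C * max (⨆ i, W i) (1 / η) ^ ((d : ℝ) - 1) *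
              max (Real.log ((⨆ i, W i) / δ)) 1 ^ d * s ^ d) *
            μH[(d : ℝ) - 1] (frontier E) := by
  refine ⟨50 ^ d, by positivity, ?_⟩
  intro E η κ L s δ W hE hη hκ hA hW _ hs hδ _
  set Wmax := ⨆ i, W i
  set A := max Wmax (1 / η)
  have hWmax : ∀ i, W i ≤ Wmax := fun i => le_ciSup (Set.finite_range W).bddAbove i
  have hA0 : 0 < A := lt_max_of_lt_right (by positivity)
  have hAη : A⁻¹ / 2 ≤ η := by
    have : A⁻¹ ≤ η := inv_le_of_inv_le₀ (by positivity) (one_div η ▸ le_max_right Wmax (1 / η))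
    linarith [inv_pos.2 hA0]
  obtain ⟨S, hSE, hSsep, hScov⟩ := (hE.of_isClosed_subset isClosed_frontier
    hE.isClosed.frontier_subset).exists_finset_separated_cover (inv_pos.2 hA0)
  have hWA : ∀ i, W i * A⁻¹ ≤ 1 := fun i => by
    rw [← div_eq_mul_inv, div_le_one hA0]; exact (hWmax i).trans (le_max_left _ _)
  set Λ := max (Real.log (Wmax / δ)) 1
  obtain ⟨hfin, hcard⟩ := finite_and_ncard_le_of_forall_mem_intBox (intBox 0 (2 * Λ)) S
    (fun j z i => lenD (W i) (j i) * z i) (R := s + 1) (by linarith)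
    fun p hp => mem_intBox_of_mem_mediumIndexSet (fun i => (hW i).le) hδ hWmax hWA hScov hp
  refine ⟨hfin, (ENNReal.ofReal_le_ofReal (mul_le_mul_of_nonneg_left hcard hκ.le)).trans ?_⟩
  rw [Fintype.card_fin]
  exact ofReal_mul_count_le hκ.le (le_max_right _ _) hs hA0
    (by simpa using card_intBox_le (0 : Fin d → ℝ) (by positivity : (0 : ℝ) ≤ 2 * Λ))
    (hA.card_mul_le_of_separated isClosed_frontier.measurableSet (inv_pos.2 hA0) hAη hSE hSsep)
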